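/- Assume g attains its maximum on ℝᴺ and let λ* be any maximizer of g. Then the Polyak–Łojasiewicz inequality holds on the column space of Z: for every λ in the column space of Z, g(λ*) − g(λ) ≤ (1/(2 μ_g)) ‖∇g(λ)‖², where μ_g = σ/𝓛. -/

import Mathlib

open Matrix Set
open scoped RealInnerProductSpace

noncomputable section

/-- The positive semidefinite square root of a positive semidefinite matrix, as defined in
Mathlib (December 2024) under this name; removed from Mathlib since. -/
def Matrix.PosSemidef.sqrt {n : Type*} [Fintype n] [DecidableEq n]
    {A : Matrix n n ℝ} (hA : A.PosSemidef) : Matrix n n ℝ :=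
  hA.1.eigenvectorUnitary.1 * diagonal ((↑) ∘ (√·) ∘ hA.1.eigenvalues) *
    (star hA.1.eigenvectorUnitary : Matrix n n ℝ)

/-- The augmented Lagrangian `L̃_α(x, λ) = f(x) + ⟨λ, Z^{1/2} x⟩ + (α/2) xᵀ Z x`,
where `Z^{1/2}` is the positive semidefinite square root of `Z`. -/
def augLag (N : ℕ) (f : EuclideanSpace ℝ (Fin N) → ℝ) (α : ℝ)
    (Z : Matrix (Fin N) (Fin N) ℝ) (hZ : Z.PosSemidef)
    (x lam : EuclideanSpace ℝ (Fin N)) : ℝ :=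
  f x + ⟪lam, Matrix.toEuclideanLin hZ.sqrt x⟫ +
    α / 2 * ⟪x, Matrix.toEuclideanLin Z x⟫

set_option maxHeartbeats 1000000

lemma dualPL.sqrt_isHermitian {N : ℕ} {Z : Matrix (Fin N) (Fin N) ℝ} (hZ : Z.PosSemidef) :
    hZ.sqrt.IsHermitian := by
  unfold Matrix.PosSemidef.sqrt
  rw [Matrix.star_eq_conjTranspose]
  exact Matrix.isHermitian_mul_mul_conjTranspose _ (Matrix.isHermitian_diagonal _)

lemma dualPL.sqrt_mul_self {N : ℕ} {Z : Matrix (Fin N) (Fin N) ℝ} (hZ : Z.PosSemidef) :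
    hZ.sqrt * hZ.sqrt = Z := by
  unfold Matrix.PosSemidef.sqrt
  conv_rhs => rw [hZ.1.spectral_theorem, Unitary.conjStarAlgAut_apply]
  have hU : (star hZ.1.eigenvectorUnitary : Matrix (Fin N) (Fin N) ℝ) *
      hZ.1.eigenvectorUnitary.1 = 1 := Unitary.coe_star_mul_self _
  have hD : diagonal ((↑) ∘ (√·) ∘ hZ.1.eigenvalues) *
      diagonal ((↑) ∘ (√·) ∘ hZ.1.eigenvalues) =
      diagonal (RCLike.ofReal ∘ hZ.1.eigenvalues : Fin N → ℝ) := by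
    rw [Matrix.diagonal_mul_diagonal]
    congr 1
    funext i
    simp [Real.mul_self_sqrt (hZ.eigenvalues_nonneg i)]
  calc _ = hZ.1.eigenvectorUnitary.1 * diagonal ((↑) ∘ (√·) ∘ hZ.1.eigenvalues) *
        ((star hZ.1.eigenvectorUnitary : Matrix (Fin N) (Fin N) ℝ) *
          hZ.1.eigenvectorUnitary.1) * diagonal ((↑) ∘ (√·) ∘ hZ.1.eigenvalues) *
        (star hZ.1.eigenvectorUnitary : Matrix (Fin N) (Fin N) ℝ) := by
          simp only [Matrix.mul_assoc]
    _ = _ := by rw [hU, Matrix.mul_one, Matrix.mul_assoc _ (diagonal _) (diagonal _), hD]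

lemma dualPL.fderiv_apply_eq_inner_gradient {E : Type*} [NormedAddCommGroup E]
    [InnerProductSpace ℝ E] [CompleteSpace E] (f : E → ℝ) (p d : E) :
    fderiv ℝ f p d = ⟪gradient f p, d⟫ := by
  rw [gradient, InnerProductSpace.toDual_symm_apply]

lemma dualPL.descent_lemma {E : Type*} [NormedAddCommGroup E] [InnerProductSpace ℝ E]
    [CompleteSpace E]
    (f : E → ℝ) (L : ℝ) (hL : 0 ≤ L)
    (hd : ∀ x, DifferentiableAt ℝ f x)
    (hlip : LipschitzWith L.toNNReal (gradient f)) (x d : E) :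
    f (x + d) ≤ f x + ⟪gradient f x, d⟫ + L / 2 * ‖d‖ ^ 2 := by
  have hline : ∀ t : ℝ, HasDerivAt (fun t : ℝ => f (x + t • d))
      ⟪gradient f (x + t • d), d⟫ t := by
    intro t
    have h1 : HasDerivAt (fun t : ℝ => x + t • d) d t := by
      simpa using ((hasDerivAt_id t).smul_const d).const_add x
    have h2 := ((hd (x + t • d)).hasFDerivAt).comp_hasDerivAt t h1
    rw [gradient, InnerProductSpace.toDual_symm_apply]
    exact h2
  set c1 : ℝ := ⟪gradient f x, d⟫ with hc1
  set ψ : ℝ → ℝ := fun t => f (x + t • d) - t * c1 - (L / 2 * ‖d‖ ^ 2) * t ^ 2 with hψdef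
  have hψ : ∀ t : ℝ, HasDerivAt ψ
      (⟪gradient f (x + t • d), d⟫ - c1 - L * t * ‖d‖ ^ 2) t := by
    intro t
    have h3 : HasDerivAt (fun t : ℝ => t * c1) c1 t := by
      simpa using (hasDerivAt_id t).mul_const c1
    have h4 : HasDerivAt (fun t : ℝ => (L / 2 * ‖d‖ ^ 2) * t ^ 2)
        ((L / 2 * ‖d‖ ^ 2) * (2 * t)) t := by
      simpa using (hasDerivAt_pow 2 t).const_mul (L / 2 * ‖d‖ ^ 2)
    have := ((hline t).sub h3).sub h4
    exact this.congr_deriv (by ring)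
  have hnonpos : ∀ t ∈ interior (Set.Icc (0:ℝ) 1), deriv ψ t ≤ 0 := by
    intro t ht
    rw [interior_Icc] at ht
    rw [(hψ t).deriv]
    have hips : ⟪gradient f (x + t • d), d⟫ - c1 = ⟪gradient f (x + t • d) - gradient f x, d⟫ := by
      rw [inner_sub_left]
    have h5 : ⟪gradient f (x + t • d) - gradient f x, d⟫ ≤
        ‖gradient f (x + t • d) - gradient f x‖ * ‖d‖ := real_inner_le_norm _ _
    have h6 : ‖gradient f (x + t • d) - gradient f x‖ ≤ L * (t * ‖d‖) := by
      have := hlip.dist_le_mul (x + t • d) x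
      rw [dist_eq_norm, dist_eq_norm] at this
      have h7 : ‖x + t • d - x‖ = t * ‖d‖ := by
        rw [add_sub_cancel_left, norm_smul, Real.norm_eq_abs, abs_of_pos ht.1]
      rw [h7] at this
      simpa [Real.coe_toNNReal L hL] using this
    have h8 : ‖gradient f (x + t • d) - gradient f x‖ * ‖d‖ ≤ L * (t * ‖d‖) * ‖d‖ :=
      mul_le_mul_of_nonneg_right h6 (norm_nonneg d)
    nlinarith [norm_nonneg d]
  have hcont : ContinuousOn ψ (Set.Icc (0:ℝ) 1) :=
    fun t _ => ((hψ t).differentiableAt.continuousAt).continuousWithinAt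
  have hdiff : DifferentiableOn ℝ ψ (interior (Set.Icc (0:ℝ) 1)) :=
    fun t _ => (hψ t).differentiableAt.differentiableWithinAt
  have hanti := antitoneOn_of_deriv_nonpos (convex_Icc (0:ℝ) 1) hcont hdiff hnonpos
  have h10 : ψ 1 ≤ ψ 0 := hanti (Set.mem_Icc.mpr ⟨le_refl 0, zero_le_one⟩)
    (Set.mem_Icc.mpr ⟨zero_le_one, le_refl 1⟩) zero_le_one
  simp only [hψdef, one_smul, zero_smul, add_zero, one_pow, one_mul, zero_mul,
    zero_pow, mul_zero, sub_zero] at h10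
  linarith

lemma dualPL.hermit_symm {N : ℕ} {Z : Matrix (Fin N) (Fin N) ℝ} (hA : Z.IsHermitian)
    (a b : EuclideanSpace ℝ (Fin N)) :
    ⟪Matrix.toEuclideanLin Z a, b⟫ = ⟪a, Matrix.toEuclideanLin Z b⟫ :=
  (Matrix.isHermitian_iff_isSymmetric.mp hA) a b

lemma dualPL.lin_eigen {N : ℕ} {Z : Matrix (Fin N) (Fin N) ℝ} (hA : Z.IsHermitian) (j : Fin N) :
    Matrix.toEuclideanLin Z (hA.eigenvectorBasis j) =
      hA.eigenvalues j • hA.eigenvectorBasis j := by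
  apply (WithLp.equiv 2 _).injective
  simpa using hA.mulVec_eigenvectorBasis j

lemma dualPL.quad_form_eq {N : ℕ} {Z : Matrix (Fin N) (Fin N) ℝ} (hA : Z.IsHermitian)
    (x : EuclideanSpace ℝ (Fin N)) :
    ⟪x, Matrix.toEuclideanLin Z x⟫ =
      ∑ j, hA.eigenvalues j * ⟪x, hA.eigenvectorBasis j⟫ ^ 2 := by
  rw [← (hA.eigenvectorBasis).sum_inner_mul_inner x (Matrix.toEuclideanLin Z x)]
  apply Finset.sum_congr rfl
  intro j _
  rw [← dualPL.hermit_symm hA, dualPL.lin_eigen hA, real_inner_smul_left, real_inner_comm]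
  ring

lemma dualPL.norm_sq_eq {N : ℕ} {Z : Matrix (Fin N) (Fin N) ℝ} (hA : Z.IsHermitian)
    (x : EuclideanSpace ℝ (Fin N)) :
    ‖x‖ ^ 2 = ∑ j, ⟪x, hA.eigenvectorBasis j⟫ ^ 2 := by
  rw [← real_inner_self_eq_norm_sq, ← (hA.eigenvectorBasis).sum_inner_mul_inner x x]
  apply Finset.sum_congr rfl
  intro j _
  rw [real_inner_comm, sq]

lemma dualPL.quad_le_rho {N : ℕ} {Z : Matrix (Fin N) (Fin N) ℝ} (hA : Z.IsHermitian)
    {ρ : ℝ} (hρmax : ∀ c ∈ spectrum ℝ Z, c ≤ ρ) (x : EuclideanSpace ℝ (Fin N)) :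
    ⟪x, Matrix.toEuclideanLin Z x⟫ ≤ ρ * ‖x‖ ^ 2 := by
  rw [dualPL.quad_form_eq hA, dualPL.norm_sq_eq hA, Finset.mul_sum]
  apply Finset.sum_le_sum
  intro j _
  exact mul_le_mul_of_nonneg_right (hρmax _ (hA.eigenvalues_mem_spectrum_real j)) (sq_nonneg _)

lemma dualPL.quad_ge_sigma {N : ℕ} {Z : Matrix (Fin N) (Fin N) ℝ} (hZ : Z.PosSemidef) {σ : ℝ}
    (hσmin : ∀ c ∈ spectrum ℝ Z, 0 < c → σ ≤ c)
    (u : EuclideanSpace ℝ (Fin N)) :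
    σ * ‖Matrix.toEuclideanLin Z u‖ ^ 2 ≤
      ⟪Matrix.toEuclideanLin Z u, Matrix.toEuclideanLin Z (Matrix.toEuclideanLin Z u)⟫ := by
  have hA := hZ.1
  rw [dualPL.quad_form_eq hA, dualPL.norm_sq_eq hA, Finset.mul_sum]
  apply Finset.sum_le_sum
  intro j _
  have h1 : ⟪Matrix.toEuclideanLin Z u, hA.eigenvectorBasis j⟫ =
      hA.eigenvalues j * ⟪u, hA.eigenvectorBasis j⟫ := by
    rw [dualPL.hermit_symm hA, dualPL.lin_eigen hA, inner_smul_right]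
  rw [h1]
  rcases (hZ.eigenvalues_nonneg j).eq_or_lt with h | h
  · rw [← h]; ring_nf; rfl
  · have := hσmin _ (hA.eigenvalues_mem_spectrum_real j) h
    nlinarith [sq_nonneg (⟪u, hA.eigenvectorBasis j⟫),
      sq_nonneg (hA.eigenvalues j * ⟪u, hA.eigenvectorBasis j⟫)]

lemma dualPL.stationarity {N : ℕ} (f : EuclideanSpace ℝ (Fin N) → ℝ) (α : ℝ)
    (Z : Matrix (Fin N) (Fin N) ℝ) (hZ : Z.PosSemidef)
    (hdf : Differentiable ℝ f)
    (lam' x₀ : EuclideanSpace ℝ (Fin N))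
    (hmin : IsMinOn (fun x => augLag N f α Z hZ x lam') Set.univ x₀)
    (d : EuclideanSpace ℝ (Fin N)) :
    ⟪gradient f x₀, d⟫ + ⟪lam', Matrix.toEuclideanLin hZ.sqrt d⟫ +
      α / 2 * (⟪x₀, Matrix.toEuclideanLin Z d⟫ + ⟪d, Matrix.toEuclideanLin Z x₀⟫) = 0 := by
  set S : EuclideanSpace ℝ (Fin N) →L[ℝ] EuclideanSpace ℝ (Fin N) :=
    LinearMap.toContinuousLinearMap (Matrix.toEuclideanLin hZ.sqrt) with hS
  set T : EuclideanSpace ℝ (Fin N) →L[ℝ] EuclideanSpace ℝ (Fin N) :=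
    LinearMap.toContinuousLinearMap (Matrix.toEuclideanLin Z) with hT
  have hF1 : HasFDerivAt f (fderiv ℝ f x₀) x₀ := (hdf x₀).hasFDerivAt
  have hF2 : HasFDerivAt (fun x => ⟪lam', Matrix.toEuclideanLin hZ.sqrt x⟫)
      ((innerSL ℝ lam').comp S) x₀ := ((innerSL ℝ lam').comp S).hasFDerivAt
  have hq : HasFDerivAt (fun x : EuclideanSpace ℝ (Fin N) => ⟪x, Matrix.toEuclideanLin Z x⟫)
      ((fderivInnerCLM ℝ (x₀, Matrix.toEuclideanLin Z x₀)).comp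
        ((ContinuousLinearMap.id ℝ _).prod T)) x₀ :=
    (hasFDerivAt_id x₀).inner ℝ T.hasFDerivAt
  have htot : HasFDerivAt (fun x => augLag N f α Z hZ x lam')
      (fderiv ℝ f x₀ + (innerSL ℝ lam').comp S + (α / 2) • ((fderivInnerCLM ℝ
        (x₀, Matrix.toEuclideanLin Z x₀)).comp ((ContinuousLinearMap.id ℝ _).prod T))) x₀ := by
    have := (hF1.add hF2).add (hq.const_mul (α / 2))
    exact this
  have hloc : IsLocalMin (fun x => augLag N f α Z hZ x lam') x₀ :=
    hmin.isLocalMin Filter.univ_mem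
  have h0 := hloc.hasFDerivAt_eq_zero htot
  have h1 := DFunLike.congr_fun h0 d
  simp only [ContinuousLinearMap.add_apply, ContinuousLinearMap.coe_smul',
    ContinuousLinearMap.comp_apply, ContinuousLinearMap.prod_apply,
    ContinuousLinearMap.id_apply, ContinuousLinearMap.zero_apply, Pi.smul_apply,
    fderivInnerCLM_apply, innerSL_apply_apply, smul_eq_mul] at h1
  rw [dualPL.fderiv_apply_eq_inner_gradient] at h1
  simp only [hS, hT, LinearMap.coe_toContinuousLinearMap'] at h1
  linarith [h1]

/-- PL inequality on the column space of `Z`: if `λ*` maximizes `g`, then for every `λ` in the column space of `Z`, `g(λ*) − g(λ) ≤ (1/(2μ_g)) ‖∇g(λ)‖²` with `μ_g = σ/𝓛` and `∇g(λ) = Z^{1/2} x*(λ)`. -/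
theorem dual_PL_inequality
    (N : ℕ) (hN : 0 < N)
    (f : EuclideanSpace ℝ (Fin N) → ℝ) (μ L : ℝ) (hμ : 0 < μ) (hL : 0 < L)
    (hf : ContDiff ℝ 2 f)
    (hsc : StrongConvexOn Set.univ μ f)
    (hlip : LipschitzWith L.toNNReal (gradient f))
    (Z : Matrix (Fin N) (Fin N) ℝ) (hZ : Z.PosSemidef) (hZ0 : Z ≠ 0)
    (ρ σ : ℝ)
    (hρ : ρ ∈ spectrum ℝ Z) (hρmax : ∀ c ∈ spectrum ℝ Z, c ≤ ρ)
    (hσ : σ ∈ spectrum ℝ Z) (hσpos : 0 < σ) (hσmin : ∀ c ∈ spectrum ℝ Z, 0 < c → σ ≤ c)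
    (α : ℝ) (hα : 0 < α)
    (xstar : EuclideanSpace ℝ (Fin N) → EuclideanSpace ℝ (Fin N))
    (hxstar : ∀ lam, IsMinOn (fun x => augLag N f α Z hZ x lam) Set.univ (xstar lam))
    (g : EuclideanSpace ℝ (Fin N) → ℝ)
    (hg : ∀ lam, g lam = augLag N f α Z hZ (xstar lam) lam)
    (lamstar : EuclideanSpace ℝ (Fin N))
    (hmax : IsMaxOn g Set.univ lamstar)
    :
    ∀ lam ∈ LinearMap.range (Matrix.toEuclideanLin Z),
      g lamstar - g lam ≤
        1 / (2 * (σ / (L + ρ * α))) * ‖Matrix.toEuclideanLin hZ.sqrt (xstar lam)‖ ^ 2 := by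
  intro lam hlam
  set S : EuclideanSpace ℝ (Fin N) →ₗ[ℝ] EuclideanSpace ℝ (Fin N) :=
    Matrix.toEuclideanLin hZ.sqrt with hSdef
  set T : EuclideanSpace ℝ (Fin N) →ₗ[ℝ] EuclideanSpace ℝ (Fin N) :=
    Matrix.toEuclideanLin Z with hTdef
  have hdf : Differentiable ℝ f := hf.differentiable (by norm_num)
  have hρpos : 0 < ρ := lt_of_lt_of_le hσpos (hρmax σ hσ)
  set 𝓛 : ℝ := L + ρ * α with h𝓛def
  have h𝓛 : 0 < 𝓛 := by positivity
  have hSsymm : ∀ a b, ⟪S a, b⟫ = ⟪a, S b⟫ := dualPL.hermit_symm (dualPL.sqrt_isHermitian hZ)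
  have hTsymm : ∀ a b, ⟪T a, b⟫ = ⟪a, T b⟫ := dualPL.hermit_symm hZ.1
  have hSS : ∀ a, S (S a) = T a := by
    intro a
    have h1 : Matrix.toEuclideanLin (hZ.sqrt * hZ.sqrt) =
        (Matrix.toEuclideanLin hZ.sqrt).comp (Matrix.toEuclideanLin hZ.sqrt) := by
      rw [Matrix.toEuclideanLin_eq_toLin]
      exact Matrix.toLin_mul _ (PiLp.basisFun 2 ℝ (Fin N)) _ _ _
    have h2 := congrArg (fun M => M a) h1
    simp only [LinearMap.comp_apply] at h2
    rw [dualPL.sqrt_mul_self hZ] at h2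
    exact h2.symm
  have hnormS : ∀ a, ‖S a‖ ^ 2 = ⟪a, T a⟫ := by
    intro a
    rw [← real_inner_self_eq_norm_sq]
    calc ⟪S a, S a⟫ = ⟪a, S (S a)⟫ := hSsymm a (S a)
      _ = ⟪a, T a⟫ := by rw [hSS]
  -- augLag depends on the multiplier only through S
  have haux : ∀ (x' μ₁ μ₂ : EuclideanSpace ℝ (Fin N)), S μ₁ = S μ₂ →
      augLag N f α Z hZ x' μ₁ = augLag N f α Z hZ x' μ₂ := by
    intro x' μ₁ μ₂ hμeq
    have hinner : ⟪μ₁, S x'⟫ = ⟪μ₂, S x'⟫ := by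
      calc ⟪μ₁, S x'⟫ = ⟪S μ₁, x'⟫ := (hSsymm μ₁ x').symm
        _ = ⟪S μ₂, x'⟫ := by rw [hμeq]
        _ = ⟪μ₂, S x'⟫ := hSsymm μ₂ x'
    unfold augLag
    rw [show Matrix.toEuclideanLin hZ.sqrt x' = S x' from rfl, hinner]
  -- orthogonal decomposition of lamstar - lam
  set K : Submodule ℝ (EuclideanSpace ℝ (Fin N)) := LinearMap.range T with hKdef
  set v : EuclideanSpace ℝ (Fin N) := (K.orthogonalProjectionOnto (lamstar - lam) : EuclideanSpace ℝ (Fin N)) with hvdef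
  have hv : v ∈ K := Submodule.coe_mem _
  set w : EuclideanSpace ℝ (Fin N) := (lamstar - lam) - v with hwdef
  have hw : w ∈ Kᗮ := Submodule.sub_starProjection_mem_orthogonal (K := K) _
  have hSw : S w = 0 := by
    have h0 : ⟪w, T w⟫ = 0 := by
      have := (Submodule.mem_orthogonal K w).mp hw (T w) ⟨w, rfl⟩
      rwa [real_inner_comm] at this
    have h1 : ‖S w‖ ^ 2 = 0 := by rw [hnormS, h0]
    have h2 : ‖S w‖ = 0 := by nlinarith [norm_nonneg (S w)]
    exact norm_eq_zero.mp h2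
  have hSlv : S (lam + v) = S lamstar := by
    have hsum : lamstar = (lam + v) + w := by rw [hwdef]; abel
    have h := congrArg S hsum
    rw [map_add, hSw, add_zero] at h
    exact h.symm
  -- step 1 : g lamstar ≤ g (lam + v)
  have step1 : g lamstar ≤ g (lam + v) := by
    calc g lamstar = augLag N f α Z hZ (xstar lamstar) lamstar := hg lamstar
      _ ≤ augLag N f α Z hZ (xstar (lam + v)) lamstar :=
        isMinOn_iff.mp (hxstar lamstar) _ (mem_univ _)
      _ = augLag N f α Z hZ (xstar (lam + v)) (lam + v) :=
        haux _ _ _ hSlv.symm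
      _ = g (lam + v) := (hg _).symm
  set x : EuclideanSpace ℝ (Fin N) := xstar lam with hxdef
  set u : EuclideanSpace ℝ (Fin N) := S x with hudef
  set d : EuclideanSpace ℝ (Fin N) := (-(𝓛⁻¹)) • S v with hddef
  -- step 2
  have step2 : g (lam + v) ≤ augLag N f α Z hZ (x + d) (lam + v) := by
    rw [hg]
    exact isMinOn_iff.mp (hxstar (lam + v)) _ (mem_univ _)
  -- step 3 : expand and bound
  have hB1 : f (x + d) ≤ f x + ⟪gradient f x, d⟫ + L / 2 * ‖d‖ ^ 2 :=
    dualPL.descent_lemma f L hL.le (fun y => hdf y) hlip x d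
  have hE2 : ⟪lam + v, S (x + d)⟫ = ⟪lam, S x⟫ + ⟪lam, S d⟫ + ⟪v, S x⟫ + ⟪v, S d⟫ := by
    rw [map_add, inner_add_left, inner_add_right, inner_add_right]
    ring
  have hE3 : ⟪x + d, T (x + d)⟫ = ⟪x, T x⟫ + (⟪x, T d⟫ + ⟪d, T x⟫) + ⟪d, T d⟫ := by
    rw [map_add, inner_add_left, inner_add_right, inner_add_right]
    ring
  have hB3 : ⟪d, T d⟫ ≤ ρ * ‖d‖ ^ 2 := dualPL.quad_le_rho hZ.1 hρmax d
  have hstat := dualPL.stationarity f α Z hZ hdf lam x (hxstar lam) d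
  have step3 : augLag N f α Z hZ (x + d) (lam + v) ≤
      g lam + ⟪v, u⟫ + ⟪v, S d⟫ + 𝓛 / 2 * ‖d‖ ^ 2 := by
    have hglam : g lam = f x + ⟪lam, S x⟫ + α / 2 * ⟪x, T x⟫ := hg lam
    have hB3' : α / 2 * ⟪d, T d⟫ ≤ α / 2 * (ρ * ‖d‖ ^ 2) :=
      mul_le_mul_of_nonneg_left hB3 (by positivity)
    unfold augLag
    rw [hE2, hE3] at *
    simp only [← hSdef, ← hTdef] at *
    nlinarith [hB1, hstat, hB3']
  -- compute the chosen direction quantities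
  set Q : ℝ := ⟪v, T v⟫ with hQdef
  have hSd : ⟪v, S d⟫ = -(𝓛⁻¹) * Q := by
    rw [hddef, _root_.map_smul, real_inner_smul_right, hSS]
  have hdnorm : ‖d‖ ^ 2 = 𝓛⁻¹ ^ 2 * Q := by
    rw [hQdef, hddef, norm_smul, mul_pow, ← hnormS]
    congr 1
    rw [norm_neg, Real.norm_eq_abs, abs_of_pos (by positivity)]
  have hQv : σ * ‖v‖ ^ 2 ≤ Q := by
    obtain ⟨u₀, hu₀⟩ := hv
    have := dualPL.quad_ge_sigma hZ hσmin u₀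
    rw [hu₀] at this
    exact this
  have hiu : ⟪v, u⟫ ≤ ‖v‖ * ‖u‖ := real_inner_le_norm v u
  -- final arithmetic
  have hXP : g lamstar - g lam ≤ ⟪v, u⟫ + (-(𝓛⁻¹) * Q) + 𝓛 / 2 * (𝓛⁻¹ ^ 2 * Q) := by
    have := le_trans step1 (le_trans step2 step3)
    rw [hSd, hdnorm] at this
    linarith
  have hσ0 : σ ≠ 0 := ne_of_gt hσpos
  have h𝓛0 : 𝓛 ≠ 0 := ne_of_gt h𝓛
  have hP : ⟪v, u⟫ + (-(𝓛⁻¹) * Q) + 𝓛 / 2 * (𝓛⁻¹ ^ 2 * Q) = ⟪v, u⟫ - 𝓛⁻¹ / 2 * Q := by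
    field_simp
    ring
  rw [hP] at hXP
  have hXL : 𝓛 * (g lamstar - g lam) ≤ 𝓛 * ⟪v, u⟫ - Q / 2 := by
    have h1 := mul_le_mul_of_nonneg_left hXP h𝓛.le
    have h2 : 𝓛 * (⟪v, u⟫ - 𝓛⁻¹ / 2 * Q) = 𝓛 * ⟪v, u⟫ - Q / 2 := by
      field_simp
    linarith [h1, h2.le, h2.ge]
  rw [show (1 : ℝ) / (2 * (σ / 𝓛)) = 𝓛 / (2 * σ) by
    field_simp]
  rw [div_mul_eq_mul_div, le_div_iff₀ (by positivity)]
  rw [← mul_le_mul_iff_of_pos_right h𝓛]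
  have hQnn : 0 ≤ Q := le_trans (by positivity) hQv
  clear_value 𝓛 Q u v
  have t1 : 2 * σ * (𝓛 * (g lamstar - g lam)) ≤ 2 * σ * (𝓛 * ⟪v, u⟫ - Q / 2) :=
    mul_le_mul_of_nonneg_left hXL (by positivity)
  have t2 : σ * (σ * ‖v‖ ^ 2) ≤ σ * Q := mul_le_mul_of_nonneg_left hQv hσpos.le
  have t3 : 2 * σ * 𝓛 * ⟪v, u⟫ ≤ 2 * σ * 𝓛 * (‖v‖ * ‖u‖) :=
    mul_le_mul_of_nonneg_left hiu (by positivity)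
  nlinarith [t1, t2, t3, sq_nonneg (σ * ‖v‖ - 𝓛 * ‖u‖)]

end
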